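/- Every tree with at least two vertices has inductive dimension 1. -/

import Mathlib

open Classical in
/-- The Knill inductive dimension of the subgraph of `G` induced on the
finite vertex set `A`: the empty graph has dimension `-1`, and otherwise
`dim = (1/|A|) · Σ_{v ∈ A} (1 + dim S(v))`, where the sphere `S(v)` is the
induced subgraph on the neighbors of `v` inside `A`. -/
noncomputable def gdim {V : Type*} (G : SimpleGraph V) (A : Finset V) : ℚ :=
  if A.card = 0 then -1
  else (A.card : ℚ)⁻¹ *
    ∑ v ∈ A.attach, (1 + gdim G (A.filter (fun u => G.Adj v.1 u)))
termination_by A.card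
decreasing_by
  apply Finset.card_lt_card
  refine ⟨Finset.filter_subset _ _, fun hsub => ?_⟩
  have hv := hsub v.2
  rw [Finset.mem_filter] at hv
  exact G.loopless.irrefl v.1 hv.2

open Classical in
lemma gdim_empty {V : Type*} (G : SimpleGraph V) : gdim G ∅ = -1 := by
  rw [gdim]; simp

open Classical in
lemma gdim_eq_zero {V : Type*} (G : SimpleGraph V) (A : Finset V)
    (hA : A.Nonempty) (h : ∀ v ∈ A, A.filter (fun u => G.Adj v u) = ∅) :
    gdim G A = 0 := by
  rw [gdim]
  rw [if_neg (by simpa [Finset.card_eq_zero] using hA.ne_empty)]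
  have : ∀ v ∈ A.attach, (1 + gdim G (A.filter (fun u => G.Adj v.1 u))) = 0 := by
    intro v _
    rw [h v.1 v.2, gdim_empty]; ring
  rw [Finset.sum_congr rfl this]
  simp

/-- Every tree (connected acyclic graph) with at least two
vertices has inductive dimension `1`. -/
theorem dim_tree {V : Type*} [Fintype V] (G : SimpleGraph V)
    (htree : G.IsTree) (hcard : 2 ≤ Fintype.card V) :
    gdim G Finset.univ = 1 := by
  classical
  -- no triangles
  have htri : ∀ v u w : V, G.Adj v u → G.Adj v w → ¬ G.Adj u w := by
    intro v u w hvu hvw huw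
    have hwv : G.Adj w v := hvw.symm
    let p : G.Walk u v := SimpleGraph.Walk.cons huw (SimpleGraph.Walk.cons hwv SimpleGraph.Walk.nil)
    have hpath : p.IsPath := by
      rw [SimpleGraph.Walk.isPath_def]
      simp [p, huw.ne, hvw.ne', hvu.ne']
    have hc : (SimpleGraph.Walk.cons hvu p).IsCycle := by
      rw [SimpleGraph.Walk.cons_isCycle_iff]
      refine ⟨hpath, ?_⟩
      simp only [p, SimpleGraph.Walk.edges_cons, SimpleGraph.Walk.edges_nil,
        List.mem_cons, List.not_mem_nil, or_false]
      push_neg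
      refine ⟨?_, ?_⟩ <;> intro h <;> rw [Sym2.eq_iff] at h <;>
        rcases h with ⟨h1, h2⟩ | ⟨h1, h2⟩
      · exact hvu.ne h1
      · exact hvw.ne h1
      · exact hvw.ne h1
      · exact huw.ne h2
    exact htree.IsAcyclic _ hc
  -- every vertex has a neighbor
  have hnbr : ∀ v : V, ∃ u, G.Adj v u := by
    intro v
    obtain ⟨w, hw⟩ := Fintype.exists_ne_of_one_lt_card (by omega) v
    obtain ⟨p⟩ := htree.isConnected v w
    cases p with
    | nil => exact absurd rfl hw.symm
    | cons h _ => exact ⟨_, h⟩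
  rw [gdim]
  have hn : (Finset.univ : Finset V).card ≠ 0 := by
    simp [Finset.card_univ]; omega
  rw [if_neg hn]
  have hterm : ∀ v ∈ (Finset.univ : Finset V).attach,
      (1 + gdim G (Finset.univ.filter (fun u => G.Adj v.1 u))) = 1 := by
    intro v _
    have h0 : gdim G (Finset.univ.filter (fun u => G.Adj v.1 u)) = 0 := by
      apply gdim_eq_zero
      · obtain ⟨u, hu⟩ := hnbr v.1
        exact ⟨u, by simp [hu]⟩
      · intro u hu
        rw [Finset.mem_filter] at hu
        rw [Finset.filter_eq_empty_iff]
        intro w hw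
        rw [Finset.mem_filter] at hw
        exact htri v.1 u w hu.2 hw.2
    rw [h0]; ring
  rw [Finset.sum_congr rfl hterm]
  simp [Finset.card_univ]
  field_simp
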